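/- For the Dirichlet–Laplace prior with parameter a ∈ (0, 1), p ≥ 2 and τ = 1, the marginal density of a single coordinate has a pole at zero: with φ1 ~ Beta(a, (p − 1)a) (the first coordinate of a Dir(a, …, a) vector) and θ | φ1 distributed Laplace with scale φ1 (density x ↦ (2φ1)^{−1} e^{−|x|/φ1}), the marginal density m(x) = ∫_0^1 (2φ)^{−1} e^{−|x|/φ} · [B(a, (p−1)a)]^{−1} φ^{a−1} (1−φ)^{(p−1)a−1} dφ satisfies m(x) → ∞ as x → 0. -/

import Mathlib

/-!
For `|x| < φ < 2|x|` the Laplace density `(2φ)⁻¹ e^{-|x|/φ}` is at least `e⁻¹ / (4|x|)` and the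
Beta density is at least a constant times `(2|x|)^(a-1)`, since `a ≤ 1`. Integrating over this
interval of length `|x|` gives `m(x) ≥ c (2|x|)^(a-1)`, which tends to infinity because `a < 1`.
The bound `(2φ)⁻¹ e^{-|x|/φ} ≤ (2|x|)⁻¹` makes the integrand integrable for `x ≠ 0`, so `m(x)` is
a genuine integral rather than the junk value `0`.
-/

/-- The marginal density of one coordinate of the Dirichlet–Laplace prior with parameter
`a`, `p` coordinates and `τ = 1`: the mixing weight `φ ~ Beta(a, (p-1)a)` and
`θ | φ ~ Lap(φ)` with density `x ↦ (2φ)⁻¹ e^{-|x|/φ}`.  Here the Beta normalizing constant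
is written as `Γ(a)Γ((p-1)a)/Γ(pa)`. -/
noncomputable def dlMarginal (a : ℝ) (p : ℕ) (x : ℝ) : ℝ :=
  ∫ φ in Set.Ioo (0 : ℝ) 1,
    (2 * φ)⁻¹ * Real.exp (-|x| / φ) *
      ((Real.Gamma a * Real.Gamma (((p : ℝ) - 1) * a) /
          Real.Gamma (a + ((p : ℝ) - 1) * a))⁻¹ *
        φ ^ (a - 1) * (1 - φ) ^ (((p : ℝ) - 1) * a - 1))

open Filter MeasureTheory Set Real ProbabilityTheory Topology

noncomputable def laplacePDFReal (b x : ℝ) : ℝ := (2 * b)⁻¹ * exp (-|x| / b)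

lemma laplacePDFReal_nonneg {b : ℝ} (hb : 0 < b) (x : ℝ) : 0 ≤ laplacePDFReal b x := by
  unfold laplacePDFReal
  positivity

@[fun_prop]
lemma measurable_laplacePDFReal (x : ℝ) : Measurable fun b => laplacePDFReal b x := by
  unfold laplacePDFReal
  fun_prop

lemma laplacePDFReal_le {b x : ℝ} (hb : 0 < b) (hx : x ≠ 0) :
    laplacePDFReal b x ≤ (2 * |x|)⁻¹ := by
  have hx' : 0 < |x| := abs_pos.mpr hx
  rw [laplacePDFReal, neg_div, exp_neg, ← mul_inv, inv_le_inv₀ (by positivity) (by positivity)]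
  calc 2 * |x| = 2 * b * (|x| / b) := by field_simp
    _ ≤ 2 * b * exp (|x| / b) := by gcongr; linarith [add_one_le_exp (|x| / b)]

lemma le_laplacePDFReal {b x : ℝ} (hx : 0 < |x|) (hxb : |x| ≤ b) (hbx : b ≤ 2 * |x|) :
    (4 * |x|)⁻¹ * exp (-1) ≤ laplacePDFReal b x := by
  have hb : 0 < b := hx.trans_le hxb
  refine mul_le_mul (inv_anti₀ (by positivity) (by linarith)) (exp_le_exp.mpr ?_)
    (by positivity) (by positivity)
  rwa [neg_div, neg_le_neg_iff, div_le_one hb]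

lemma betaPDFReal_nonneg {α β : ℝ} (hα : 0 < α) (hβ : 0 < β) (x : ℝ) :
    0 ≤ betaPDFReal α β x := by
  by_cases hx : 0 < x ∧ x < 1
  · exact (betaPDFReal_pos hx.1 hx.2 hα hβ).le
  · simp [betaPDFReal, hx]

lemma integrable_betaPDFReal {α β : ℝ} (hα : 0 < α) (hβ : 0 < β) :
    Integrable (betaPDFReal α β) := by
  refine (integrable_toReal_of_lintegral_ne_top (f := betaPDF α β)
    (measurable_betaPDFReal α β).ennreal_ofReal.aemeasurable
    (by simp [lintegral_betaPDF_eq_one hα hβ])).congr (ae_of_all _ fun x => ?_)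
  simp [betaPDF, ENNReal.toReal_ofReal (betaPDFReal_nonneg hα hβ x)]

lemma half_rpow_abs_le_rpow {y : ℝ} (hy : 1 / 2 ≤ y) (hy1 : y ≤ 1) (r : ℝ) :
    (1 / 2 : ℝ) ^ |r| ≤ y ^ r :=
  calc (1 / 2 : ℝ) ^ |r| ≤ y ^ |r| := rpow_le_rpow (by norm_num) hy (abs_nonneg r)
    _ ≤ y ^ r := rpow_le_rpow_of_exponent_ge (by linarith) hy1 (le_abs_self r)

lemma le_betaPDFReal {α β s x : ℝ} (hα : 0 < α) (hα1 : α ≤ 1) (hβ : 0 < β) (hx : 0 < x)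
    (hxs : x ≤ s) (hs : s ≤ 1 / 2) :
    (beta α β)⁻¹ * s ^ (α - 1) * (1 / 2) ^ |β - 1| ≤ betaPDFReal α β x := by
  have := beta_pos hα hβ
  rw [betaPDFReal, if_pos (show 0 < x ∧ x < 1 from ⟨hx, by linarith⟩), one_div (beta α β)]
  refine mul_le_mul (mul_le_mul_of_nonneg_left ?_ (by positivity)) ?_ (by positivity)
    (by positivity)
  · exact rpow_le_rpow_of_nonpos hx hxs (by linarith)
  · exact half_rpow_abs_le_rpow (by linarith) (by linarith) _

lemma dlMarginal_eq (a : ℝ) (p : ℕ) (x : ℝ) :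
    dlMarginal a p x =
      ∫ φ in Ioo 0 1, laplacePDFReal φ x * betaPDFReal a (((p : ℝ) - 1) * a) φ :=
  setIntegral_congr_fun measurableSet_Ioo fun φ hφ => by
    rw [betaPDFReal, if_pos (show 0 < φ ∧ φ < 1 from hφ), one_div, laplacePDFReal, beta]

lemma integrableOn_laplacePDFReal_mul {w : ℝ → ℝ} {x : ℝ} (hw : IntegrableOn w (Ioi 0))
    (hx : x ≠ 0) : IntegrableOn (fun φ => laplacePDFReal φ x * w φ) (Ioi 0) := by
  refine hw.bdd_mul (c := (2 * |x|)⁻¹) (measurable_laplacePDFReal x).aestronglyMeasurable ?_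
  filter_upwards [ae_restrict_mem measurableSet_Ioi] with φ (hφ : 0 < φ)
  rw [norm_of_nonneg (laplacePDFReal_nonneg hφ x)]
  exact laplacePDFReal_le hφ hx

lemma le_setIntegral_laplacePDFReal_mul {w : ℝ → ℝ} {x L : ℝ} (hx : 0 < |x|) (hx1 : 2 * |x| ≤ 1)
    (hL : 0 ≤ L) (hw0 : ∀ φ ∈ Ioo 0 1, 0 ≤ w φ) (hwL : ∀ φ ∈ Ioo |x| (2 * |x|), L ≤ w φ)
    (hint : IntegrableOn (fun φ => laplacePDFReal φ x * w φ) (Ioo 0 1)) :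
    exp (-1) / 4 * L ≤ ∫ φ in Ioo 0 1, laplacePDFReal φ x * w φ := by
  have hsub : Ioo |x| (2 * |x|) ⊆ Ioo 0 1 := Ioo_subset_Ioo hx.le hx1
  have hpt : ∀ φ ∈ Ioo |x| (2 * |x|), (4 * |x|)⁻¹ * exp (-1) * L ≤ laplacePDFReal φ x * w φ :=
    fun φ hφ => mul_le_mul (le_laplacePDFReal hx hφ.1.le hφ.2.le) (hwL φ hφ) hL
      (laplacePDFReal_nonneg (hx.trans hφ.1) x)
  calc exp (-1) / 4 * L = (4 * |x|)⁻¹ * exp (-1) * L * volume.real (Ioo |x| (2 * |x|)) := by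
        rw [Real.volume_real_Ioo_of_le (by linarith)]
        field_simp
        ring
    _ ≤ ∫ φ in Ioo |x| (2 * |x|), laplacePDFReal φ x * w φ :=
        setIntegral_ge_of_const_le_real measurableSet_Ioo measure_Ioo_lt_top.ne hpt
          (hint.mono_set hsub)
    _ ≤ ∫ φ in Ioo 0 1, laplacePDFReal φ x * w φ :=
        setIntegral_mono_set hint
          (ae_restrict_of_forall_mem measurableSet_Ioo fun φ hφ =>
            mul_nonneg (laplacePDFReal_nonneg hφ.1 x) (hw0 φ hφ))
          hsub.eventuallyLE

lemma le_dlMarginal {a : ℝ} {p : ℕ} (ha0 : 0 < a) (ha1 : a ≤ 1) (hb : 0 < ((p : ℝ) - 1) * a)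
    {x : ℝ} (hx : x ≠ 0) (hx4 : |x| ≤ 1 / 4) :
    exp (-1) / 4 * ((beta a (((p : ℝ) - 1) * a))⁻¹ * (2 * |x|) ^ (a - 1) *
      (1 / 2) ^ |((p : ℝ) - 1) * a - 1|) ≤ dlMarginal a p x := by
  have hx' : 0 < |x| := abs_pos.mpr hx
  have := beta_pos ha0 hb
  rw [dlMarginal_eq]
  exact le_setIntegral_laplacePDFReal_mul hx' (by linarith) (by positivity)
    (fun φ _ => betaPDFReal_nonneg ha0 hb φ)
    (fun φ hφ => le_betaPDFReal ha0 ha1 hb (hx'.trans hφ.1) hφ.2.le (by linarith))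
    ((integrableOn_laplacePDFReal_mul (integrable_betaPDFReal ha0 hb).integrableOn hx).mono_set
      Ioo_subset_Ioi_self)

lemma tendsto_two_mul_abs_rpow_nhdsNE_zero {r : ℝ} (hr : r < 0) :
    Tendsto (fun x : ℝ => (2 * |x|) ^ r) (𝓝[≠] 0) atTop := by
  refine (tendsto_rpow_neg_nhdsGT_zero hr).comp (tendsto_nhdsWithin_iff.mpr ⟨?_, ?_⟩)
  · exact ((continuous_abs.const_mul 2).tendsto' 0 0 (by simp)).mono_left nhdsWithin_le_nhds
  · filter_upwards [self_mem_nhdsWithin] with x (hx : x ≠ 0)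
    exact mul_pos two_pos (abs_pos.mpr hx)

/-- For the Dirichlet–Laplace prior with `a ∈ (0,1)`, `p ≥ 2`, `τ = 1`, the marginal
density of a single coordinate has a pole at zero: `m(x) → ∞` as `x → 0`. -/
theorem statement11 (a : ℝ) (ha0 : 0 < a) (ha1 : a < 1) (p : ℕ) (hp : 2 ≤ p) :
    Tendsto (dlMarginal a p) (nhdsWithin 0 {x : ℝ | x ≠ 0}) atTop := by
  set b := ((p : ℝ) - 1) * a
  have hb : 0 < b := mul_pos (by linarith [show (2 : ℝ) ≤ p from mod_cast hp]) ha0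
  have hC : 0 < exp (-1) / 4 * (beta a b)⁻¹ * (1 / 2) ^ |b - 1| := by
    have := beta_pos ha0 hb
    positivity
  refine tendsto_atTop_mono' _ ?_
    ((tendsto_two_mul_abs_rpow_nhdsNE_zero (sub_neg.mpr ha1)).const_mul_atTop hC)
  have hsmall : ∀ᶠ x in 𝓝 (0 : ℝ), |x| ≤ 1 / 4 :=
    (continuous_abs.tendsto' 0 0 abs_zero).eventually (eventually_le_nhds (by norm_num))
  filter_upwards [self_mem_nhdsWithin, nhdsWithin_le_nhds hsmall] with x hx hx4
  exact (le_dlMarginal ha0 ha1.le hb hx hx4).trans_eq' (by ring)
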